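/- Let G be a Tanner graph with a rooted tree decomposition, and let t be an introduce node with single child t' introducing a variable node v, i.e. B_t = B_{t'} ∪ {v} with v ∈ L and v ∉ B_{t'}. Let R' ⊆ B_t^c and Q ⊆ B_t^v with v ∈ Q. Then: (i) the singleton {v} is a trapping set with parameters (R',Q) in G_t if and only if Q = {v} and R' = N_{G_t}(v); (ii) a set S with v ∈ S and |S| ≥ 2 is a trapping set with parameters (R',Q) in G_t if and only if S \ {v} is a trapping set with parameters (R' ⊕ N_{G_t}(v), Q \ {v}) in G_{t'}. -/

import Mathlib

/-!
Since `t'` is the only child of `t` and `B t = B t' ∪ {v}`, the vertex set of `G_t` is that of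
`G_{t'}` with `v` added. Adding the variable node `v` to `S` changes `|N(c) ∩ S|` by one exactly
at the checks `c` adjacent to `v` and leaves it unchanged elsewhere, so `Γ_o` changes by the
symmetric difference with `N_{G_t}(v)`; the conditions on the bag are unaffected away from `v`.
-/

/-- A Tanner graph: a bipartite graph on vertex set `V` partitioned into
variable nodes `L` and check nodes `R`, every edge joining `L` and `R`. -/
structure TannerGraph (V : Type*) where
  G : SimpleGraph V
  L : Set V
  R : Set V
  disj : Disjoint L R
  cover : L ∪ R = Set.univ
  bipartite : ∀ ⦃u v⦄, G.Adj u v → (u ∈ L ∧ v ∈ R) ∨ (u ∈ R ∧ v ∈ L)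

/-- `Γ_o(G[S])`: check nodes having an odd number of neighbours in `S`. -/
def TannerGraph.Gamma {V : Type*} (TG : TannerGraph V) (S : Set V) : Set V :=
  {c | c ∈ TG.R ∧ Odd ((TG.G.neighborSet c ∩ S).ncard)}

/-- A rooted tree decomposition of the graph `G`: `T` is a finite tree with
root `root` and bags `B i ⊆ V` covering all vertices and edges, such that for
every vertex the set of bags containing it induces a connected subgraph of `T`. -/
structure IsRootedTreeDecomp {V ι : Type*} (G : SimpleGraph V)
    (T : SimpleGraph ι) (root : ι) (B : ι → Set V) : Prop where
  isTree : T.IsTree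
  covers : ∀ v, ∃ i, v ∈ B i
  coversEdge : ∀ ⦃u v⦄, G.Adj u v → ∃ i, u ∈ B i ∧ v ∈ B i
  connBags : ∀ v, (T.induce {i | v ∈ B i}).Connected

/-- `Desc T root t i`: `i` is a descendant of `t` in the tree `T` rooted at
`root`, i.e. `t` lies on a path from the root to `i` (`t` itself included). -/
def Desc {ι : Type*} (T : SimpleGraph ι) (root : ι) (t i : ι) : Prop :=
  ∃ p : T.Walk root i, p.IsPath ∧ t ∈ p.support

/-- `IsChildOf T root s t`: `s` is a child of `t` in the rooted tree. -/
def IsChildOf {ι : Type*} (T : SimpleGraph ι) (root : ι) (s t : ι) : Prop :=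
  T.Adj t s ∧ Desc T root t s

/-- `∪_{i ∈ T_t} B_i`: union of the bags over all descendants of `t`;
this is the vertex set of the induced subgraph `G_t`. -/
def subVerts {V ι : Type*} (T : SimpleGraph ι) (root : ι) (B : ι → Set V)
    (t : ι) : Set V :=
  {v | ∃ i, Desc T root t i ∧ v ∈ B i}

/-- `Γ_o(G_t[S])`, where `W` is the vertex set of `G_t`: check nodes of `G_t`
having an odd number of `G_t`-neighbours in `S`. -/
def GammaLoc {V : Type*} (TG : TannerGraph V) (W S : Set V) : Set V :=
  {c | c ∈ TG.R ∧ c ∈ W ∧ Odd ((TG.G.neighborSet c ∩ W ∩ S).ncard)}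

/-- `S` is a trapping set with parameters `(R', Q)` in `G_t`, where `W` is the
vertex set of `G_t` and `Bt` is the bag at `t`. -/
def HasParams {V : Type*} (TG : TannerGraph V) (W Bt S R' Q : Set V) : Prop :=
  S.Nonempty ∧ S ⊆ W ∩ TG.L ∧ S ∩ (Bt ∩ TG.L) = Q ∧ GammaLoc TG W S = R'

/-- `S` is a trapping set with extended parameters `(I, Q, d)` in `G_t`. -/
def HasExtParams {V : Type*} (TG : TannerGraph V) (W Bt S I Q : Set V)
    (d : ℕ) : Prop :=
  S.Nonempty ∧ S ⊆ W ∩ TG.L ∧ S ∩ (Bt ∩ TG.L) = Q ∧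
    GammaLoc TG W S ∩ (Bt ∩ TG.R) = I ∧ (GammaLoc TG W S \ (Bt ∩ TG.R)).ncard = d

/-- `Γ_o(G_t[Q ∪ B_t^c]) = {c ∈ B_t^c : |N_{G_t}(c) ∩ Q| is odd}`. -/
def GammaBag {V : Type*} (TG : TannerGraph V) (W Bt Q : Set V) : Set V :=
  {c | c ∈ Bt ∩ TG.R ∧ Odd ((TG.G.neighborSet c ∩ W ∩ Q).ncard)}

open scoped symmDiff

namespace Desc

variable {ι : Type*} {T : SimpleGraph ι} {root : ι}

lemma refl (hT : T.Preconnected) (x : ι) : Desc T root x x := by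
  classical
  obtain ⟨w⟩ := hT root x
  exact ⟨w.bypass, w.bypass_isPath, w.bypass.end_mem_support⟩

lemma trans (hT : T.IsAcyclic) {t s i : ι} (hts : Desc T root t s) (hsi : Desc T root s i) :
    Desc T root t i := by
  classical
  obtain ⟨p, hp, htp⟩ := hts
  obtain ⟨q, hq, hsq⟩ := hsi
  have hpq : q.takeUntil s hsq = p :=
    congrArg Subtype.val ((hT.subsingleton_path root s).elim ⟨_, hq.takeUntil hsq⟩ ⟨p, hp⟩)
  exact ⟨q, hq, q.support_takeUntil_subset_support hsq (hpq ▸ htp)⟩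

/-- The child is the vertex following `t` on the path from the root to `i`. -/
lemma exists_isChildOf [DecidableEq ι] {t i : ι} (h : Desc T root t i) (hne : i ≠ t) :
    ∃ s, IsChildOf T root s t ∧ Desc T root s i := by
  obtain ⟨p, hp, htp⟩ := h
  obtain ⟨s, hadj, q, hq⟩ := (p.dropUntil t htp).exists_eq_cons_of_ne (Ne.symm hne)
  have hs_drop : s ∈ (p.dropUntil t htp).support.tail := by
    rw [hq, SimpleGraph.Walk.support_cons, List.tail_cons]
    exact q.start_mem_support
  have hs_take : s ∉ (p.takeUntil t htp).support := by
    have hnd := hp.support_nodup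
    rw [← p.take_spec htp, SimpleGraph.Walk.support_append, List.nodup_append] at hnd
    exact fun hs => hnd.2.2 s hs s hs_drop rfl
  have hpath : ((p.takeUntil t htp).concat hadj).IsPath := by
    rw [← SimpleGraph.Walk.isPath_reverse_iff, SimpleGraph.Walk.reverse_concat]
    exact (hp.takeUntil htp).reverse.cons (by simpa using hs_take)
  refine ⟨s, ⟨hadj, _, hpath, ?_⟩, p, hp, ?_⟩
  · simp
  · exact p.support_dropUntil_subset_support htp (List.mem_of_mem_tail hs_drop)

end Desc

section SubVerts

variable {V ι : Type*} {T : SimpleGraph ι} {root : ι} {B : ι → Set V}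

lemma bag_subset_subVerts (hT : T.Preconnected) (t : ι) : B t ⊆ subVerts T root B t :=
  fun _ hv => ⟨t, Desc.refl hT t, hv⟩

lemma subVerts_eq_union_of_unique_child (hT : T.IsTree) {t t' : ι}
    (hchild : IsChildOf T root t' t) (honly : ∀ s, IsChildOf T root s t → s = t') :
    subVerts T root B t = B t ∪ subVerts T root B t' := by
  classical
  ext w
  constructor
  · rintro ⟨i, hti, hwi⟩
    by_cases hit : i = t
    · exact Or.inl (hit ▸ hwi)
    · obtain ⟨s, hs, hsi⟩ := hti.exists_isChildOf hit
      exact Or.inr ⟨i, honly s hs ▸ hsi, hwi⟩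
  · rintro (hw | ⟨i, ht'i, hwi⟩)
    · exact bag_subset_subVerts hT.connected.preconnected t hw
    · exact ⟨i, hchild.2.trans hT.isAcyclic ht'i, hwi⟩

end SubVerts

section Trapping

variable {V : Type*} (TG : TannerGraph V) {W Bt S R' Q : Set V} {v : V}

lemma TannerGraph.neighborSet_subset_R (hvL : v ∈ TG.L) : TG.G.neighborSet v ⊆ TG.R :=
  fun _ hc => (TG.bipartite hc).elim And.right fun h => absurd hvL (TG.disj.notMem_of_mem_right h.1)

@[simp]
lemma gammaLoc_empty : GammaLoc TG W ∅ = ∅ := by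
  ext c
  simp [GammaLoc]

lemma gammaLoc_insert_left (hvL : v ∈ TG.L) (hvS : v ∉ S) :
    GammaLoc TG (insert v W) S = GammaLoc TG W S := by
  ext c
  have hcount : TG.G.neighborSet c ∩ insert v W ∩ S = TG.G.neighborSet c ∩ W ∩ S := by
    rw [Set.inter_assoc, Set.insert_inter_of_notMem hvS, ← Set.inter_assoc]
  simp only [GammaLoc, Set.mem_ofPred_eq, hcount]
  refine and_congr_right fun hcR => and_congr_left' (Set.mem_insert_iff.trans (or_iff_right ?_))
  rintro rfl
  exact TG.disj.notMem_of_mem_left hvL hcR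

lemma gammaLoc_insert (hvL : v ∈ TG.L) (hvW : v ∈ W) (hvS : v ∉ S) (hS : S.Finite) :
    GammaLoc TG W (insert v S) = GammaLoc TG W S ∆ (TG.G.neighborSet v ∩ W) := by
  ext c
  by_cases hc : c ∈ TG.G.neighborSet v ∩ W
  · have hvN : v ∈ TG.G.neighborSet c ∩ W := ⟨hc.1.symm, hvW⟩
    have hcR : c ∈ TG.R := TG.neighborSet_subset_R hvL hc.1
    have hcount : (insert v (TG.G.neighborSet c ∩ W ∩ S)).ncard =
        (TG.G.neighborSet c ∩ W ∩ S).ncard + 1 :=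
      Set.ncard_insert_of_notMem (fun h => hvS h.2) (hS.subset Set.inter_subset_right)
    simp [GammaLoc, Set.mem_symmDiff, Set.inter_insert_of_mem hvN, hcount, Nat.odd_add_one, hc,
      hcR, hc.2]
  · by_cases hcW : c ∈ W
    · have hvN : v ∉ TG.G.neighborSet c ∩ W := fun h => hc ⟨h.1.symm, hcW⟩
      simp [GammaLoc, Set.mem_symmDiff, Set.inter_insert_of_notMem hvN, hc]
    · simp [GammaLoc, Set.mem_symmDiff, hcW]

lemma hasParams_singleton_iff (hvL : v ∈ TG.L) (hvW : v ∈ W) (hvB : v ∈ Bt) :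
    HasParams TG W Bt {v} R' Q ↔ Q = {v} ∧ R' = TG.G.neighborSet v ∩ W := by
  have hΓ : GammaLoc TG W {v} = TG.G.neighborSet v ∩ W := by
    rw [← insert_empty_eq, gammaLoc_insert TG hvL hvW (Set.notMem_empty v) Set.finite_empty,
      gammaLoc_empty, Set.bot_eq_empty.symm, bot_symmDiff]
  simp [HasParams, hΓ, hvW, hvL, hvB, eq_comm]

lemma hasParams_insert_iff (hvL : v ∈ TG.L) (hvS : v ∈ S) (hvQ : v ∈ Q) (hS : S.Finite)
    (hS' : (S \ {v}).Nonempty) :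
    HasParams TG (insert v W) (insert v Bt) S R' Q ↔
      HasParams TG W Bt (S \ {v}) (R' ∆ (TG.G.neighborSet v ∩ insert v W)) (Q \ {v}) := by
  have hvS' : v ∉ S \ {v} := fun h => h.2 rfl
  have hΓ : GammaLoc TG (insert v W) S =
      GammaLoc TG W (S \ {v}) ∆ (TG.G.neighborSet v ∩ insert v W) := by
    conv_lhs => rw [← Set.insert_sdiff_self_of_mem hvS]
    rw [gammaLoc_insert TG hvL (Set.mem_insert v W) hvS' hS.sdiff, gammaLoc_insert_left TG hvL hvS']
  have hbag : (S \ {v}) ∩ (Bt ∩ TG.L) = (S ∩ (insert v Bt ∩ TG.L)) \ {v} := by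
    ext x
    simp only [Set.mem_inter_iff, Set.mem_sdiff, Set.mem_insert_iff, Set.mem_singleton_iff]
    tauto
  have hvbag : v ∈ S ∩ (insert v Bt ∩ TG.L) := ⟨hvS, Set.mem_insert v Bt, hvL⟩
  unfold HasParams
  rw [hΓ, hbag, Set.sdiff_singleton_subset_iff, ← Set.insert_inter_of_mem hvL,
    ← symmDiff_left_inj (a := GammaLoc TG W (S \ {v})) (b := TG.G.neighborSet v ∩ insert v W),
    symmDiff_symmDiff_cancel_right]
  refine and_congr (iff_of_true ⟨v, hvS⟩ hS') (and_congr Iff.rfl (and_congr ?_ Iff.rfl))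
  refine ⟨fun h => h ▸ rfl, fun h => ?_⟩
  rw [← Set.insert_sdiff_self_of_mem hvbag, h, Set.insert_sdiff_self_of_mem hvQ]

end Trapping

theorem stmt_10_general {V ι : Type*}
    (TG : TannerGraph V) (T : SimpleGraph ι) (root : ι) (B : ι → Set V)
    (hD : IsRootedTreeDecomp TG.G T root B)
    (t t' : ι) (hchild : IsChildOf T root t' t)
    (honly : ∀ s, IsChildOf T root s t → s = t')
    (v : V) (hvL : v ∈ TG.L) (hBt : B t = B t' ∪ {v})
    (R' Q : Set V) (hvQ : v ∈ Q) :
    (HasParams TG (subVerts T root B t) (B t) {v} R' Q ↔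
      (Q = {v} ∧ R' = TG.G.neighborSet v ∩ subVerts T root B t)) ∧
    (∀ S : Set V, v ∈ S → 2 ≤ S.ncard →
      (HasParams TG (subVerts T root B t) (B t) S R' Q ↔
        HasParams TG (subVerts T root B t') (B t') (S \ {v})
          (symmDiff R' (TG.G.neighborSet v ∩ subVerts T root B t)) (Q \ {v}))) := by
  have hT := hD.isTree
  have hvB : v ∈ B t := hBt ▸ Or.inr rfl
  have hW : subVerts T root B t = insert v (subVerts T root B t') := by
    rw [subVerts_eq_union_of_unique_child hT hchild honly, hBt, Set.union_right_comm,
      Set.union_eq_right.2 (bag_subset_subVerts hT.connected.preconnected t'), Set.union_singleton]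
  refine ⟨hasParams_singleton_iff TG hvL (hW ▸ Set.mem_insert v _) hvB, fun S hvS hS2 => ?_⟩
  have hS : S.Finite := Set.finite_of_ncard_pos (by omega)
  have hS' : (S \ {v}).Nonempty := Set.nonempty_of_ncard_ne_zero <| by
    rw [Set.ncard_sdiff_singleton_of_mem hvS]
    omega
  rw [hW, hBt, Set.union_singleton]
  exact hasParams_insert_iff TG hvL hvS hvQ hS hS'

/-- introduce-variable-node rule, case `v ∈ Q`. -/
theorem stmt_10 {V ι : Type*} [Fintype V] [Fintype ι]
    (TG : TannerGraph V) (T : SimpleGraph ι) (root : ι) (B : ι → Set V)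
    (hD : IsRootedTreeDecomp TG.G T root B)
    (t t' : ι) (hchild : IsChildOf T root t' t)
    (honly : ∀ s, IsChildOf T root s t → s = t')
    (v : V) (hvL : v ∈ TG.L) (hvB : v ∉ B t') (hBt : B t = B t' ∪ {v})
    (R' Q : Set V) (hR' : R' ⊆ B t ∩ TG.R) (hQ : Q ⊆ B t ∩ TG.L) (hvQ : v ∈ Q) :
    (HasParams TG (subVerts T root B t) (B t) {v} R' Q ↔
      (Q = {v} ∧ R' = TG.G.neighborSet v ∩ subVerts T root B t)) ∧
    (∀ S : Set V, v ∈ S → 2 ≤ S.ncard →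
      (HasParams TG (subVerts T root B t) (B t) S R' Q ↔
        HasParams TG (subVerts T root B t') (B t') (S \ {v})
          (symmDiff R' (TG.G.neighborSet v ∩ subVerts T root B t)) (Q \ {v}))) :=
  stmt_10_general TG T root B hD t t' hchild honly v hvL hBt R' Q hvQ
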